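/- The complementary energy W* is differentiable at every (m,n) ∈ ℝ³ × ℝ³, and its gradient at (m,n) equals (u, v − (0,0,1)), where (u,v) = F(m,n); that is, ∂W*/∂m₁ = u₁, ∂W*/∂m₂ = u₂, ∂W*/∂m₃ = u₃, ∂W*/∂n₁ = v₁, ∂W*/∂n₂ = v₂, ∂W*/∂n₃ = v₃ − 1. -/
import Mathlib


/-- The complementary quadratic form `Q*(m,n)`. -/
noncomputable def Qstar (α β ζ η ι : ℝ) (m n : Fin 3 → ℝ) : ℝ :=
  (m 0 ^ 2 + m 1 ^ 2) / α ^ 2 + (n 0 ^ 2 + n 1 ^ 2) / ζ ^ 2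
    + (η ^ 2 * m 2 ^ 2 + β ^ 2 * n 2 ^ 2 - 2 * ι * m 2 * n 2) / (β ^ 2 * η ^ 2 - ι ^ 2)

/-- The forward constitutive map `F : (m,n) ↦ (u,v)`, with
`λ = (γ^p + Q*(m,n)^{p/2})^{−1/p}`. -/
noncomputable def Fmap (p α β γ ζ η ι : ℝ) (m n : Fin 3 → ℝ) :
    (Fin 3 → ℝ) × (Fin 3 → ℝ) :=
  let lam : ℝ := (γ ^ p + (Qstar α β ζ η ι m n) ^ (p / 2)) ^ (-(1 / p))
  (![lam * m 0 / α ^ 2, lam * m 1 / α ^ 2,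
      lam * (η ^ 2 * m 2 - ι * n 2) / (β ^ 2 * η ^ 2 - ι ^ 2)],
   ![lam * n 0 / ζ ^ 2, lam * n 1 / ζ ^ 2,
      1 + lam * (β ^ 2 * n 2 - ι * m 2) / (β ^ 2 * η ^ 2 - ι ^ 2)])

/-- The complementary energy `W*(m,n) = (1/2)∫₀^{Q*(m,n)} (γ^p + t^{p/2})^{−1/p} dt`,
as a function on `ℝ³ × ℝ³`. -/
noncomputable def Wstar (p α β γ ζ η ι : ℝ) (x : (Fin 3 → ℝ) × (Fin 3 → ℝ)) : ℝ :=
  (1 / 2) * ∫ t in (0 : ℝ)..(Qstar α β ζ η ι x.1 x.2), (γ ^ p + t ^ (p / 2)) ^ (-(1 / p))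


private lemma hasFDerivAt_div_const' {E : Type*} [NormedAddCommGroup E] [NormedSpace ℝ E]
    {f : E → ℝ} {f' : E →L[ℝ] ℝ} {x : E} (h : HasFDerivAt f f' x) (c : ℝ) :
    HasFDerivAt (fun x => f x / c) (c⁻¹ • f') x := by
  simpa [div_eq_inv_mul] using h.const_mul c⁻¹

/-- `W*` is differentiable everywhere and its gradient at `(m,n)` is
`(u, v − (0,0,1))` where `(u,v) = F(m,n)`. -/
theorem Wstar_hasGradient (p α β γ ζ η ι : ℝ) (hp : 0 < p) (hα : 0 < α) (hβ : 0 < β)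
    (hγ : 0 < γ) (hζ : 0 < ζ) (hη : 0 < η) (hβηι : 0 < β ^ 2 * η ^ 2 - ι ^ 2) :
    ∀ m n : Fin 3 → ℝ,
      DifferentiableAt ℝ (Wstar p α β γ ζ η ι) (m, n) ∧
      ∀ dm dn : Fin 3 → ℝ,
        fderiv ℝ (Wstar p α β γ ζ η ι) (m, n) (dm, dn)
          = (Fmap p α β γ ζ η ι m n).1 0 * dm 0
            + (Fmap p α β γ ζ η ι m n).1 1 * dm 1
            + (Fmap p α β γ ζ η ι m n).1 2 * dm 2
            + (Fmap p α β γ ζ η ι m n).2 0 * dn 0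
            + (Fmap p α β γ ζ η ι m n).2 1 * dn 1
            + ((Fmap p α β γ ζ η ι m n).2 2 - 1) * dn 2 := by
  intro m n
  set g : ℝ → ℝ := fun t => (γ ^ p + t ^ (p / 2)) ^ (-(1 / p)) with hgdef
  set Q : ℝ := Qstar α β ζ η ι m n with hQdef
  have hQ0 : 0 ≤ Q := by
    have h3 : 0 ≤ η ^ 2 * m 2 ^ 2 + β ^ 2 * n 2 ^ 2 - 2 * ι * m 2 * n 2 := by
      nlinarith [sq_nonneg (η^2 * m 2 - ι * n 2), mul_nonneg hβηι.le (sq_nonneg (n 2)),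
        pow_pos hη 2, sq_nonneg (m 2), sq_nonneg (n 2)]
    rw [hQdef]
    unfold Qstar
    have := hβηι
    positivity
  have hbase : ∀ t : ℝ, -γ^2 < t → 0 < γ ^ p + t ^ (p/2) := by
    intro t ht
    rcases le_or_gt 0 t with h0 | h0
    · have := Real.rpow_nonneg h0 (p/2)
      positivity
    · have habs : |t ^ (p/2)| ≤ |t| ^ (p/2) := Real.abs_rpow_le_abs_rpow t (p/2)
      have hlt : |t| ^ (p/2) < (γ^2) ^ (p/2) := by
        apply Real.rpow_lt_rpow (abs_nonneg t) _ (by positivity)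
        rw [abs_of_neg h0]; linarith
      have hγ2 : ((γ^2 : ℝ)) ^ (p/2) = γ ^ p := by
        rw [← Real.rpow_natCast γ 2, ← Real.rpow_mul hγ.le]
        congr 1; ring
      rw [hγ2] at hlt
      have : -(γ^p) < t ^ (p/2) := by
        calc -(γ^p) < -(|t| ^ (p/2)) := by linarith
        _ ≤ -|t ^ (p/2)| := by linarith
        _ ≤ t ^ (p/2) := neg_abs_le _
      linarith
  have hgc : ∀ t : ℝ, -γ^2 < t → ContinuousAt g t := by
    intro t ht
    have h1 : ContinuousAt (fun s : ℝ => γ ^ p + s ^ (p/2)) t :=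
      continuousAt_const.add ((Real.continuous_rpow_const (by positivity)).continuousAt)
    have h2 : ContinuousAt (fun y : ℝ => y ^ (-(1/p))) (γ ^ p + t ^ (p/2)) :=
      Real.continuousAt_rpow_const _ _ (Or.inl (ne_of_gt (hbase t ht)))
    exact ContinuousAt.comp (g := fun y : ℝ => y ^ (-(1/p))) h2 h1
  have hmeas : StronglyMeasurableAtFilter g (nhds Q) MeasureTheory.volume :=
    ContinuousAt.stronglyMeasurableAtFilter (isOpen_Ioi (a := -γ^2)) (fun x hx => hgc x hx) Q
      (by simp only [Set.mem_Ioi]; nlinarith)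
  have hint : IntervalIntegrable g MeasureTheory.volume 0 Q := by
    apply ContinuousOn.intervalIntegrable
    intro t ht
    rw [Set.uIcc_of_le hQ0] at ht
    exact (hgc t (by nlinarith [ht.1])).continuousWithinAt
  have hh : HasDerivAt (fun s : ℝ => (1/2 : ℝ) * ∫ t in (0:ℝ)..s, g t) ((1/2) * g Q) Q :=
    (intervalIntegral.integral_hasDerivAt_right hint hmeas (hgc Q (by nlinarith))).const_mul _
  -- derivative of the quadratic form
  have hm0 := ((ContinuousLinearMap.proj (0 : Fin 3)).comp
      (ContinuousLinearMap.fst ℝ (Fin 3 → ℝ) (Fin 3 → ℝ))).hasFDerivAt (x := (m, n))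
  have hm1 := ((ContinuousLinearMap.proj (1 : Fin 3)).comp
      (ContinuousLinearMap.fst ℝ (Fin 3 → ℝ) (Fin 3 → ℝ))).hasFDerivAt (x := (m, n))
  have hm2 := ((ContinuousLinearMap.proj (2 : Fin 3)).comp
      (ContinuousLinearMap.fst ℝ (Fin 3 → ℝ) (Fin 3 → ℝ))).hasFDerivAt (x := (m, n))
  have hn0 := ((ContinuousLinearMap.proj (0 : Fin 3)).comp
      (ContinuousLinearMap.snd ℝ (Fin 3 → ℝ) (Fin 3 → ℝ))).hasFDerivAt (x := (m, n))
  have hn1 := ((ContinuousLinearMap.proj (1 : Fin 3)).comp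
      (ContinuousLinearMap.snd ℝ (Fin 3 → ℝ) (Fin 3 → ℝ))).hasFDerivAt (x := (m, n))
  have hn2 := ((ContinuousLinearMap.proj (2 : Fin 3)).comp
      (ContinuousLinearMap.snd ℝ (Fin 3 → ℝ) (Fin 3 → ℝ))).hasFDerivAt (x := (m, n))
  have sm0 := (hasDerivAt_pow 2 (m 0)).comp_hasFDerivAt (m, n) hm0
  have sm1 := (hasDerivAt_pow 2 (m 1)).comp_hasFDerivAt (m, n) hm1
  have sm2 := (hasDerivAt_pow 2 (m 2)).comp_hasFDerivAt (m, n) hm2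
  have sn0 := (hasDerivAt_pow 2 (n 0)).comp_hasFDerivAt (m, n) hn0
  have sn1 := (hasDerivAt_pow 2 (n 1)).comp_hasFDerivAt (m, n) hn1
  have sn2 := (hasDerivAt_pow 2 (n 2)).comp_hasFDerivAt (m, n) hn2
  have hq := ((hasFDerivAt_div_const' (sm0.add sm1) (α^2)).add
      (hasFDerivAt_div_const' (sn0.add sn1) (ζ^2))).add
      (hasFDerivAt_div_const'
        (((sm2.const_mul (η^2)).add (sn2.const_mul (β^2))).sub
          ((hm2.const_mul (2*ι)).mul hn2)) (β^2*η^2 - ι^2))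
  have hW0 := hh.comp_hasFDerivAt (m, n) hq
  have hW : HasFDerivAt (Wstar p α β γ ζ η ι) _ (m, n) := hW0
  refine ⟨hW.differentiableAt, fun dm dn => ?_⟩
  rw [hW.fderiv]
  have hα2 : (α:ℝ)^2 ≠ 0 := by positivity
  have hζ2 : (ζ:ℝ)^2 ≠ 0 := by positivity
  have hD : (β^2*η^2 - ι^2 : ℝ) ≠ 0 := ne_of_gt hβηι
  simp only [Fmap, ← hQdef, hgdef, ContinuousLinearMap.smul_apply, ContinuousLinearMap.add_apply,
    ContinuousLinearMap.sub_apply, ContinuousLinearMap.comp_apply, ContinuousLinearMap.proj_apply,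
    ContinuousLinearMap.coe_fst', ContinuousLinearMap.coe_snd', smul_eq_mul,
    Function.comp_apply, ContinuousLinearMap.coe_comp', pow_one, Nat.cast_ofNat,
    Matrix.cons_val_zero, Matrix.cons_val_one, Matrix.head_cons, Matrix.cons_val_two,
    Matrix.tail_cons]
  field_simp
  ring
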